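/- Let (A(τ))_{τ ∈ ℕ} be as in the fBm model (A(0)=0, A(τ) = λτ + Z(τ), Z(τ) ~ N(0, σ²τ^(2H)), H ∈ (1/2,1)), and let C > λ, b > 0, β ∈ (0,1−H). Then P[sup_{τ ≥ 0} (A(τ) − Cτ) > b] ≤ Γ(1/(2β)) / (2β(−log η)^(1/(2β))), where η = exp(−(1/(2σ²))·((C−λ)/(H+β))^(2(H+β))·(b/(1−(H+β)))^(2−2(H+β))). -/

import Mathlib

/-!
At a slot `τ ≥ 1` the backlog exceeds `b` exactly when `Z τ > b + (C - λ) τ`. By weighted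
AM-GM with weights `H + β` and `1 - (H + β)`, the line `b + (C - λ) τ` dominates the tangent
curve `M τ ^ (H + β)`, so the Gaussian Chernoff bound gives the slot probability at most
`exp (-K τ ^ (2β))` with `K = -log η`. The union bound over slots and comparison of the sum
with `∫₀^∞ exp (-K x ^ (2β)) dx = Γ(1/(2β)) / (2β K ^ (1/(2β)))` finish the proof.
-/

open Real Set MeasureTheory ProbabilityTheory
open scoped NNReal ENNReal

section GaussianTail

variable {Ω : Type*} [MeasurableSpace Ω] {μ : Measure Ω} {X : Ω → ℝ} {v : ℝ≥0}

lemma hasSubgaussianMGF_of_map_eq_gaussianReal (hX : μ.map X = gaussianReal 0 v) :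
    HasSubgaussianMGF X v μ := by
  have hXm : AEMeasurable X μ := aemeasurable_of_map_neZero (by rw [hX]; infer_instance)
  refine (HasSubgaussianMGF.id_map_iff hXm).1 ?_
  rw [hX]
  exact ⟨integrable_exp_mul_gaussianReal, fun t ↦ by simp [mgf_id_gaussianReal]⟩

lemma measure_lt_le_exp_of_map_eq_gaussianReal [IsFiniteMeasure μ]
    (hX : μ.map X = gaussianReal 0 v) {c : ℝ} (hc : 0 ≤ c) :
    μ {ω | c < X ω} ≤ ENNReal.ofReal (exp (-c ^ 2 / (2 * v))) := calc
  μ {ω | c < X ω} ≤ μ {ω | c ≤ X ω} := measure_mono fun _ h ↦ le_of_lt (α := ℝ) h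
  _ = ENNReal.ofReal (μ.real {ω | c ≤ X ω}) := (ofReal_measureReal (measure_ne_top _ _)).symm
  _ ≤ _ := ENNReal.ofReal_le_ofReal
    ((hasSubgaussianMGF_of_map_eq_gaussianReal hX).measure_ge_le hc)

end GaussianTail

lemma tsum_ofReal_exp_neg_mul_rpow_succ_le {K p : ℝ} (hK : 0 < K) (hp : 0 < p) :
    ∑' n : ℕ, ENNReal.ofReal (exp (-K * ((n : ℝ) + 1) ^ p)) ≤
      ENNReal.ofReal (Gamma (1 / p) / (p * K ^ (1 / p))) := by
  set f : ℝ → ℝ := fun x ↦ exp (-K * x ^ p)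
  have anti : AntitoneOn f (Ici 0) := fun x hx y _ hxy ↦
    exp_le_exp.2 (by nlinarith [rpow_le_rpow hx hxy hp.le])
  have integrable : IntegrableOn f (Ioi 0) := by
    simpa only [rpow_zero, one_mul] using
      integrableOn_rpow_mul_exp_neg_mul_rpow (s := 0) neg_one_lt_zero hp hK
  have nonneg : ∀ t ∈ Ioi (0 : ℝ), 0 ≤ f t := fun _ _ ↦ (exp_pos _).le
  have summable : Summable fun n : ℕ ↦ f ((n + 1 : ℕ) : ℝ) :=
    (summable_nat_add_iff 1).2 (anti.summable_of_integrableOn_Ioi_zero integrable nonneg)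
  have integral : ∫ x in Ioi (0 : ℝ), f x = Gamma (1 / p) / (p * K ^ (1 / p)) := by
    rw [integral_exp_neg_mul_rpow hp hK, Gamma_add_one (one_div_ne_zero hp.ne'), neg_div,
      rpow_neg hK.le]
    field_simp
  push_cast at summable
  rw [← ENNReal.ofReal_tsum_of_nonneg (fun _ ↦ (exp_pos _).le) summable, ← integral]
  exact ENNReal.ofReal_le_ofReal (by exact_mod_cast anti.tsum_add_one_le_integral integrable nonneg)

lemma rpow_mul_rpow_mul_rpow_le_add_mul {a b α t : ℝ} (ha : 0 ≤ a) (hb : 0 ≤ b)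
    (hα : α ∈ Ioo 0 1) (ht : 0 ≤ t) :
    (a / α) ^ α * (b / (1 - α)) ^ (1 - α) * t ^ α ≤ b + a * t := by
  obtain ⟨hα0, hα1⟩ := hα
  have amgm := geom_mean_le_arith_mean2_weighted hα0.le (sub_nonneg.2 hα1.le)
    (mul_nonneg (div_nonneg ha hα0.le) ht) (div_nonneg hb (sub_nonneg.2 hα1.le)) (by ring)
  rw [mul_rpow (div_nonneg ha hα0.le) ht] at amgm
  convert amgm using 1
  · ring
  · field_simp [(sub_pos.2 hα1).ne']
    ring

/-- The paper's `-log η`, with `a = C - λ` and `α = H + β`. -/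
noncomputable def backlogExponent (σ a b α : ℝ) : ℝ :=
  1 / (2 * σ ^ 2) * (a / α) ^ (2 * α) * (b / (1 - α)) ^ (2 - 2 * α)

lemma backlogExponent_pos {σ a b α : ℝ} (hσ : σ ≠ 0) (ha : 0 < a) (hb : 0 < b)
    (hα : α ∈ Ioo 0 1) : 0 < backlogExponent σ a b α := by
  have := hα.1; have := sub_pos.2 hα.2
  unfold backlogExponent; positivity

lemma backlogExponent_mul_rpow_le {σ a b H β t : ℝ} (ha : 0 ≤ a) (hb : 0 ≤ b)
    (hα : H + β ∈ Ioo 0 1) (ht : 0 < t) :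
    backlogExponent σ a b (H + β) * t ^ (2 * β) ≤
      (b + a * t) ^ 2 / (2 * (σ ^ 2 * t ^ (2 * H))) := by
  set M := (a / (H + β)) ^ (H + β) * (b / (1 - (H + β))) ^ (1 - (H + β)) * t ^ (H + β)
  have hM0 : 0 ≤ M := by have := hα.1; have := hα.2; positivity
  have hMsq : M ^ 2 = (a / (H + β)) ^ (2 * (H + β)) * (b / (1 - (H + β))) ^ (2 - 2 * (H + β)) *
      t ^ (2 * β) * t ^ (2 * H) := by
    obtain ⟨hα0, hα1⟩ := hα
    have hx : 0 ≤ a / (H + β) := div_nonneg ha hα0.le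
    have hy : 0 ≤ b / (1 - (H + β)) := div_nonneg hb (sub_nonneg.2 hα1.le)
    rw [mul_pow, mul_pow, ← rpow_mul_natCast hx, ← rpow_mul_natCast hy,
      ← rpow_mul_natCast ht.le, mul_assoc _ (t ^ (2 * β)), ← rpow_add ht]
    ring_nf
  have hsq : M ^ 2 ≤ (b + a * t) ^ 2 :=
    pow_le_pow_left₀ hM0 (rpow_mul_rpow_mul_rpow_le_add_mul ha hb hα ht.le) 2
  have ht2H : 0 < t ^ (2 * H) := rpow_pos_of_pos ht _
  calc _ = M ^ 2 / (2 * (σ ^ 2 * t ^ (2 * H))) := by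
        rw [backlogExponent, hMsq]; field_simp
    _ ≤ _ := by gcongr

lemma measure_add_mul_lt_le_exp_backlogExponent {Ω : Type*} [MeasurableSpace Ω] {μ : Measure Ω}
    [IsFiniteMeasure μ] {X : Ω → ℝ} {σ a b H β t : ℝ} (ha : 0 ≤ a) (hb : 0 ≤ b)
    (hα : H + β ∈ Ioo 0 1) (ht : 0 < t)
    (hX : μ.map X = gaussianReal 0 (σ ^ 2 * t ^ (2 * H)).toNNReal) :
    μ {ω | b + a * t < X ω} ≤
      ENNReal.ofReal (exp (-backlogExponent σ a b (H + β) * t ^ (2 * β))) := by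
  refine (measure_lt_le_exp_of_map_eq_gaussianReal hX (by positivity)).trans
    (ENNReal.ofReal_le_ofReal (exp_le_exp.2 ?_))
  rw [Real.coe_toNNReal _ (by positivity), neg_div, neg_mul, neg_le_neg_iff]
  exact backlogExponent_mul_rpow_le ha hb hα ht

theorem fbm_backlog_bound {Ω : Type*} [MeasurableSpace Ω] (μ : Measure Ω)
    [IsProbabilityMeasure μ] (A Z : ℕ → Ω → ℝ) (lam σ C H β b : ℝ)
    (hσ : 0 < σ) (hC : lam < C) (hH : H ∈ Set.Ioo (1/2 : ℝ) 1)
    (hβ : β ∈ Set.Ioo (0:ℝ) (1 - H)) (hb : 0 < b)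
    (hA0 : ∀ ω, A 0 ω = 0)
    (hA : ∀ τ : ℕ, ∀ ω, A τ ω = lam * τ + Z τ ω)
    (hZ : ∀ τ : ℕ, 1 ≤ τ →
      Measure.map (Z τ) μ = gaussianReal 0 (Real.toNNReal (σ ^ 2 * (τ : ℝ) ^ (2 * H)))) :
    let η := Real.exp (-(1 / (2 * σ ^ 2)) * ((C - lam) / (H + β)) ^ (2 * (H + β)) *
      (b / (1 - (H + β))) ^ (2 - 2 * (H + β)))
    μ {ω | ∃ τ : ℕ, A τ ω - C * τ > b} ≤
      ENNReal.ofReal (Real.Gamma (1 / (2 * β)) / (2 * β * (-Real.log η) ^ (1 / (2 * β)))) := by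
  intro η
  have hα : H + β ∈ Ioo (0 : ℝ) 1 := ⟨by linarith [hH.1, hβ.1], by linarith [hβ.2]⟩
  set K := backlogExponent σ (C - lam) b (H + β)
  have hK : 0 < K := backlogExponent_pos hσ.ne' (sub_pos.2 hC) hb hα
  have hlog : -log η = K := by simp only [η, log_exp, K, backlogExponent]; ring
  have hslot (τ : ℕ) : μ {ω | A (τ + 1) ω - C * (τ + 1 : ℕ) > b} ≤
      ENNReal.ofReal (exp (-K * ((τ : ℝ) + 1) ^ (2 * β))) := by
    have hτ : (0 : ℝ) < (τ + 1 : ℕ) := by positivity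
    convert measure_add_mul_lt_le_exp_backlogExponent (sub_pos.2 hC).le hb.le hα hτ
      (hZ (τ + 1) le_add_self) using 2
    · ext ω
      simp only [mem_ofPred_eq, hA]
      constructor <;> intro <;> linarith
    · push_cast; rfl
  -- `τ = 0` contributes nothing, as `A 0 = 0 < b`.
  have hunion : {ω | ∃ τ : ℕ, A τ ω - C * τ > b} =
      ⋃ τ : ℕ, {ω | A (τ + 1) ω - C * (τ + 1 : ℕ) > b} := by
    ext ω
    simp only [mem_ofPred_eq, mem_iUnion]
    constructor
    · rintro ⟨_ | τ, hτ⟩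
      · simp only [hA0, CharP.cast_eq_zero, mul_zero, sub_zero] at hτ; linarith
      · exact ⟨τ, hτ⟩
    · rintro ⟨τ, hτ⟩
      exact ⟨τ + 1, hτ⟩
  rw [hunion, hlog]
  calc _ ≤ ∑' τ : ℕ, μ {ω | A (τ + 1) ω - C * (τ + 1 : ℕ) > b} := measure_iUnion_le _
    _ ≤ ∑' τ : ℕ, ENNReal.ofReal (exp (-K * ((τ : ℝ) + 1) ^ (2 * β))) :=
        ENNReal.tsum_le_tsum hslot
    _ ≤ _ := tsum_ofReal_exp_neg_mul_rpow_succ_le hK (by linarith [hβ.1])
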